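/- Let K be a field of characteristic 0, α ∈ K, A ∈ M_l(K). Suppose f(X) = Σ_{n≥0} a_n X^n/n! with a_n ∈ K^l (column vectors), and suppose the identity f((1-αX₁)^{-1}(X₂-X₁)) = (1-αX₁)^{A/α}·(f(X₂) - f(X₁)) holds in (K[[X₁,X₂]])^l, where (1-αX₁)^{A/α} := Σ_{k≥0} ∏_{i=0}^{k-1}(-A + iα·I) X₁^k/k!. Then a_0 = 0 and a_m = ∏_{i=1}^{m-1}(A + iα·I)·a_1 for all m ≥ 1. -/

import Mathlib

open Finset

variable {K : Type*} [Field K] [CharZero K] {l : ℕ}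

/-- Build a two-variable power series over `K` from its coefficients. -/
def mvMk (f : (Fin 2 →₀ ℕ) → K) : MvPowerSeries (Fin 2) K := f

/-- Substitution of a series `s` with zero constant term into the `c`-th
component `f_c(T) = Σ_{n≥0} a_n(c) T^n/n!` of the vector of power series `f`:
since `s` has zero constant term, `coeff d (s^n) = 0` for `n` larger than the
total degree of `d`, so the coefficient at `d` is the displayed finite sum. -/
noncomputable def fSub (a : ℕ → Fin l → K) (s : MvPowerSeries (Fin 2) K)
    (c : Fin l) : MvPowerSeries (Fin 2) K :=
  mvMk fun d =>
    ∑ n ∈ Finset.range (d 0 + d 1 + 1),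
      ((Nat.factorial n : K)⁻¹ * a n c) * MvPowerSeries.coeff (R := K) d (s ^ n)

/-- `negAscProd A α k = ∏_{i=0}^{k-1}(-A + iα·I)`. -/
def negAscProd (A : Matrix (Fin l) (Fin l) K) (α : K) : ℕ → Matrix (Fin l) (Fin l) K
  | 0 => 1
  | n + 1 => negAscProd A α n * (-A + ((n : K) * α) • (1 : Matrix (Fin l) (Fin l) K))

/-- The matrix of two-variable power series
`(1-αX₁)^{A/α} := Σ_{k≥0} ∏_{i=0}^{k-1}(-A + iα·I) X₁^k/k!`. -/
noncomputable def matSeries (A : Matrix (Fin l) (Fin l) K) (α : K)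
    (c c' : Fin l) : MvPowerSeries (Fin 2) K :=
  mvMk fun d =>
    if d 1 = 0 then (Nat.factorial (d 0) : K)⁻¹ * (negAscProd A α (d 0)) c c' else 0

/-- `ascProdPos A α m = ∏_{i=1}^{m}(A + iα·I)`. -/
def ascProdPos (A : Matrix (Fin l) (Fin l) K) (α : K) : ℕ → Matrix (Fin l) (Fin l) K
  | 0 => 1
  | n + 1 => ascProdPos A α n * (A + (((n + 1 : ℕ) : K) * α) • (1 : Matrix (Fin l) (Fin l) K))

noncomputable def m2 (i j : ℕ) : Fin 2 →₀ ℕ := Finsupp.single 0 i + Finsupp.single 1 j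

@[simp] lemma m2_apply0 (i j : ℕ) : m2 i j 0 = i := by simp [m2]
@[simp] lemma m2_apply1 (i j : ℕ) : m2 i j 1 = j := by simp [m2]

lemma eq_m2 (d : Fin 2 →₀ ℕ) : d = m2 (d 0) (d 1) := by
  ext x
  fin_cases x <;> simp [m2]

@[simp] lemma m2_eq_iff {i j i' j' : ℕ} : m2 i j = m2 i' j' ↔ i = i' ∧ j = j' := by
  constructor
  · intro h
    constructor
    · have := congrArg (fun f => f 0) h; simpa using this
    · have := congrArg (fun f => f 1) h; simpa using this
  · rintro ⟨rfl, rfl⟩; rfl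

lemma single0_eq (n : ℕ) : Finsupp.single (0 : Fin 2) n = m2 n 0 := by simp [m2]
lemma single1_eq (n : ℕ) : Finsupp.single (1 : Fin 2) n = m2 0 n := by simp [m2]
lemma zero_eq_m2 : (0 : Fin 2 →₀ ℕ) = m2 0 0 := by simp [m2]

lemma m2_add (i j i' j' : ℕ) : m2 i j + m2 i' j' = m2 (i+i') (j+j') := by
  ext x; fin_cases x <;> simp [m2]

lemma coeff_mul_m2 (a b : MvPowerSeries (Fin 2) K) (i j : ℕ) :
    MvPowerSeries.coeff (R := K) (m2 i j) (a*b)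
      = ∑ p ∈ range (i+1), ∑ q ∈ range (j+1),
          MvPowerSeries.coeff (R := K) (m2 p q) a * MvPowerSeries.coeff (R := K) (m2 (i-p) (j-q)) b := by
  rw [MvPowerSeries.coeff_mul, ← Finset.sum_product']
  refine Finset.sum_nbij' (fun uv => ((uv.1 0 : ℕ), (uv.1 1 : ℕ)))
    (fun pq => (m2 pq.1 pq.2, m2 (i - pq.1) (j - pq.2))) ?_ ?_ ?_ ?_ ?_
  · rintro ⟨u, v⟩ h
    rw [Finset.HasAntidiagonal.mem_antidiagonal] at h
    have h0 : u 0 + v 0 = i := by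
      have := congrArg (fun f => f 0) h; simpa using this
    have h1 : u 1 + v 1 = j := by
      have := congrArg (fun f => f 1) h; simpa using this
    simp only [mem_product, mem_range]
    omega
  · rintro ⟨p, q⟩ h
    simp only [mem_product, mem_range] at h
    rw [Finset.HasAntidiagonal.mem_antidiagonal, m2_add]
    congr 1 <;> omega
  · rintro ⟨u, v⟩ h
    rw [Finset.HasAntidiagonal.mem_antidiagonal] at h
    have h0 : u 0 + v 0 = i := by
      have := congrArg (fun f => f 0) h; simpa using this
    have h1 : u 1 + v 1 = j := by
      have := congrArg (fun f => f 1) h; simpa using this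
    have hu := eq_m2 u
    have hv := eq_m2 v
    simp only [Prod.mk.injEq]
    constructor
    · exact hu.symm
    · rw [hv]; congr 1 <;> omega
  · rintro ⟨p, q⟩ h
    simp
  · rintro ⟨u, v⟩ h
    rw [Finset.HasAntidiagonal.mem_antidiagonal] at h
    have h0 : u 0 + v 0 = i := by
      have := congrArg (fun f => f 0) h; simpa using this
    have h1 : u 1 + v 1 = j := by
      have := congrArg (fun f => f 1) h; simpa using this
    have hveq : v = m2 (i - u 0) (j - u 1) := by
      ext x; fin_cases x <;> simp <;> omega
    dsimp only
    rw [← eq_m2 u, ← hveq]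


section YCoeff
variable (α : K) {Y : MvPowerSeries (Fin 2) K}

lemma coeff_one_sub (r s : ℕ) :
    MvPowerSeries.coeff (R := K) (m2 r s)
        (1 - MvPowerSeries.C (σ := Fin 2) (R := K) α * MvPowerSeries.X 0)
      = (if r = 0 ∧ s = 0 then 1 else 0) - (if r = 1 ∧ s = 0 then α else 0) := by
  rw [map_sub, MvPowerSeries.coeff_one, MvPowerSeries.coeff_C_mul, MvPowerSeries.coeff_X]
  simp only [zero_eq_m2, single0_eq, m2_eq_iff]
  split_ifs <;> simp_all

lemma coeff_X1 (r s : ℕ) :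
    MvPowerSeries.coeff (R := K) (m2 r s) (MvPowerSeries.X 1 : MvPowerSeries (Fin 2) K)
      = if r = 0 ∧ s = 1 then 1 else 0 := by
  rw [MvPowerSeries.coeff_X]
  simp only [single1_eq, m2_eq_iff]

lemma coeff_X0 (r s : ℕ) :
    MvPowerSeries.coeff (R := K) (m2 r s) (MvPowerSeries.X 0 : MvPowerSeries (Fin 2) K)
      = if r = 1 ∧ s = 0 then 1 else 0 := by
  rw [MvPowerSeries.coeff_X]
  simp only [single0_eq, m2_eq_iff]

variable (hY : Y * (1 - MvPowerSeries.C (σ := Fin 2) (R := K) α * MvPowerSeries.X 0)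
          = MvPowerSeries.X 1 - MvPowerSeries.X 0)
include hY

lemma coeff_Y0 (j : ℕ) :
    MvPowerSeries.coeff (R := K) (m2 0 j) Y = if j = 1 then 1 else 0 := by
  have h := congrArg (MvPowerSeries.coeff (R := K) (m2 0 j)) hY
  rw [map_sub, coeff_mul_m2, coeff_X1, coeff_X0] at h
  rw [Finset.sum_range_one] at h
  have hinner : ∀ q ∈ range (j+1),
      MvPowerSeries.coeff (R := K) (m2 0 q) Y *
        MvPowerSeries.coeff (R := K) (m2 (0-0) (j-q))
          (1 - MvPowerSeries.C (σ := Fin 2) (R := K) α * MvPowerSeries.X 0)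
      = if q = j then MvPowerSeries.coeff (R := K) (m2 0 q) Y else 0 := by
    intro q hq
    rw [mem_range] at hq
    clear h hY
    rw [coeff_one_sub]
    norm_num
    split_ifs <;> solve | ring | omega | (exfalso; omega) | simp_all
  rw [Finset.sum_congr rfl hinner, Finset.sum_ite_eq',
    if_pos (Finset.self_mem_range_succ j)] at h
  rw [h]
  split_ifs <;> simp_all

lemma coeff_Y1 (j : ℕ) :
    MvPowerSeries.coeff (R := K) (m2 1 j) Y
      = if j = 1 then α else if j = 0 then -1 else 0 := by
  have h := congrArg (MvPowerSeries.coeff (R := K) (m2 1 j)) hY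
  rw [map_sub, coeff_mul_m2, coeff_X1, coeff_X0] at h
  rw [Finset.sum_range_succ, Finset.sum_range_one] at h
  have h0 : ∀ q ∈ range (j+1),
      MvPowerSeries.coeff (R := K) (m2 0 q) Y *
        MvPowerSeries.coeff (R := K) (m2 (1-0) (j-q))
          (1 - MvPowerSeries.C (σ := Fin 2) (R := K) α * MvPowerSeries.X 0)
      = if q = j then -α * MvPowerSeries.coeff (R := K) (m2 0 q) Y else 0 := by
    intro q hq
    rw [mem_range] at hq
    clear h hY
    rw [coeff_one_sub]
    norm_num
    split_ifs <;> solve | ring | omega | (exfalso; omega) | simp_all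
  have h1 : ∀ q ∈ range (j+1),
      MvPowerSeries.coeff (R := K) (m2 1 q) Y *
        MvPowerSeries.coeff (R := K) (m2 (1-1) (j-q))
          (1 - MvPowerSeries.C (σ := Fin 2) (R := K) α * MvPowerSeries.X 0)
      = if q = j then MvPowerSeries.coeff (R := K) (m2 1 q) Y else 0 := by
    intro q hq
    rw [mem_range] at hq
    clear h hY
    rw [coeff_one_sub]
    norm_num
    split_ifs <;> solve | ring | omega | (exfalso; omega) | simp_all
  rw [Finset.sum_congr rfl h0, Finset.sum_congr rfl h1, Finset.sum_ite_eq',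
    Finset.sum_ite_eq', if_pos (Finset.self_mem_range_succ j),
    if_pos (Finset.self_mem_range_succ j), coeff_Y0 α hY] at h
  split_ifs with hj1 hj0
  · subst hj1; norm_num at h; linear_combination h
  · subst hj0; norm_num at h; linear_combination h
  · norm_num [hj1, hj0] at h; linear_combination h

end YCoeff

section PowCoeff
variable (α : K) {Y : MvPowerSeries (Fin 2) K}
variable (hY : Y * (1 - MvPowerSeries.C (σ := Fin 2) (R := K) α * MvPowerSeries.X 0)
          = MvPowerSeries.X 1 - MvPowerSeries.X 0)
include hY

lemma coeff_powY0 (n m : ℕ) :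
    MvPowerSeries.coeff (R := K) (m2 0 m) (Y ^ n) = if m = n then 1 else 0 := by
  induction n generalizing m with
  | zero =>
    rw [pow_zero, MvPowerSeries.coeff_one]
    simp only [zero_eq_m2, m2_eq_iff]
    split_ifs <;> solve | rfl | omega | (exfalso; omega) | simp_all
  | succ n ih =>
    rw [pow_succ, coeff_mul_m2, Finset.sum_range_one]
    have hterm : ∀ q ∈ range (m+1),
        MvPowerSeries.coeff (R := K) (m2 0 q) (Y ^ n) *
          MvPowerSeries.coeff (R := K) (m2 (0-0) (m-q)) Y
        = if q = n then (if m - q = 1 then (1:K) else 0) else 0 := by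
      intro q hq
      simp only [Nat.sub_self]
      rw [ih, coeff_Y0 α hY]
      split_ifs <;> solve | ring | omega | (exfalso; omega)
    rw [Finset.sum_congr rfl hterm, Finset.sum_ite_eq']
    simp only [mem_range]
    split_ifs <;> solve | rfl | omega | (exfalso; omega)

lemma coeff_powY1 (n m : ℕ) :
    MvPowerSeries.coeff (R := K) (m2 1 m) (Y ^ n)
      = if n = m + 1 then -(n:K) else if n = m then (m:K) * α else 0 := by
  induction n generalizing m with
  | zero =>
    rw [pow_zero, MvPowerSeries.coeff_one]
    simp only [zero_eq_m2, m2_eq_iff]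
    rw [if_neg (by omega : ¬(1 = 0 ∧ m = 0)), if_neg (by omega : ¬(0 = m + 1))]
    by_cases h : 0 = m
    · rw [if_pos h, ← h]; norm_num
    · rw [if_neg h]
  | succ n ih =>
    rw [pow_succ, coeff_mul_m2, Finset.sum_range_succ, Finset.sum_range_one]
    have h0 : ∀ q ∈ range (m+1),
        MvPowerSeries.coeff (R := K) (m2 0 q) (Y ^ n) *
          MvPowerSeries.coeff (R := K) (m2 (1-0) (m-q)) Y
        = if q = n then (if m - q = 1 then α else if m - q = 0 then -1 else 0) else 0 := by
      intro q hq
      simp only [Nat.sub_zero]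
      rw [coeff_powY0 α hY, coeff_Y1 α hY]
      split_ifs <;> solve | ring | omega | (exfalso; omega)
    have h1 : ∀ q ∈ range (m+1),
        MvPowerSeries.coeff (R := K) (m2 1 q) (Y ^ n) *
          MvPowerSeries.coeff (R := K) (m2 (1-1) (m-q)) Y
        = if q = m - 1 then (if 1 ≤ m then
            (if n = q + 1 then -(n:K) else if n = q then (q:K) * α else 0) else 0) else 0 := by
      intro q hq
      rw [mem_range] at hq
      simp only [Nat.sub_self]
      rw [ih, coeff_Y0 α hY]
      split_ifs <;> solve | ring | omega | (exfalso; omega)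
    rw [Finset.sum_congr rfl h0, Finset.sum_congr rfl h1, Finset.sum_ite_eq',
      Finset.sum_ite_eq']
    simp only [mem_range]
    rcases m with _ | m
    · rw [if_pos (by omega : 0 - 1 < 0 + 1), if_neg (by omega : ¬(1 ≤ 0))]
      split_ifs <;> solve | (exfalso; omega) | (push_cast; ring) | omega | norm_num | (norm_num; omega) | (push_cast; ring_nf; omega)
    · simp only [Nat.add_sub_cancel]
      rw [if_pos (by omega : m < m + 1 + 1), if_pos (by omega : 1 ≤ m + 1)]
      split_ifs <;> solve | (exfalso; omega) | (push_cast; ring) | omega | norm_num | (norm_num; omega) | (push_cast; ring_nf; omega)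

end PowCoeff


section Extract
variable (α : K)

lemma coeff_fSub (a : ℕ → Fin l → K) (s : MvPowerSeries (Fin 2) K) (c : Fin l) (i j : ℕ) :
    MvPowerSeries.coeff (R := K) (m2 i j) (fSub a s c)
      = ∑ n ∈ Finset.range (i + j + 1),
          ((Nat.factorial n : K)⁻¹ * a n c) * MvPowerSeries.coeff (R := K) (m2 i j) (s ^ n) := by
  show (fSub a s c) (m2 i j) = _
  simp only [fSub, mvMk, m2_apply0, m2_apply1]

lemma coeff_matSeries (A : Matrix (Fin l) (Fin l) K) (c c' : Fin l) (i j : ℕ) :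
    MvPowerSeries.coeff (R := K) (m2 i j) (matSeries A α c c')
      = if j = 0 then (Nat.factorial i : K)⁻¹ * negAscProd A α i c c' else 0 := by
  show (matSeries A α c c') (m2 i j) = _
  simp only [matSeries, mvMk, m2_apply0, m2_apply1]

lemma coeff_fSubX1 (a : ℕ → Fin l → K) (c : Fin l) (i j : ℕ) :
    MvPowerSeries.coeff (R := K) (m2 i j) (fSub a (MvPowerSeries.X 1) c)
      = if i = 0 then (Nat.factorial j : K)⁻¹ * a j c else 0 := by
  rw [coeff_fSub]
  have hterm : ∀ n ∈ range (i+j+1),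
      ((Nat.factorial n : K)⁻¹ * a n c) *
        MvPowerSeries.coeff (R := K) (m2 i j) ((MvPowerSeries.X 1 : MvPowerSeries (Fin 2) K) ^ n)
      = if n = j then (if i = 0 then (Nat.factorial n : K)⁻¹ * a n c else 0) else 0 := by
    intro n hn
    rw [MvPowerSeries.X_pow_eq, MvPowerSeries.coeff_monomial]
    simp only [single1_eq, m2_eq_iff]
    split_ifs <;> solve | ring | (exfalso; omega) | omega
  rw [Finset.sum_congr rfl hterm, Finset.sum_ite_eq',
    if_pos (Finset.mem_range.mpr (by omega))]

lemma coeff_fSubX0 (a : ℕ → Fin l → K) (c : Fin l) (i j : ℕ) :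
    MvPowerSeries.coeff (R := K) (m2 i j) (fSub a (MvPowerSeries.X 0) c)
      = if j = 0 then (Nat.factorial i : K)⁻¹ * a i c else 0 := by
  rw [coeff_fSub]
  have hterm : ∀ n ∈ range (i+j+1),
      ((Nat.factorial n : K)⁻¹ * a n c) *
        MvPowerSeries.coeff (R := K) (m2 i j) ((MvPowerSeries.X 0 : MvPowerSeries (Fin 2) K) ^ n)
      = if n = i then (if j = 0 then (Nat.factorial n : K)⁻¹ * a n c else 0) else 0 := by
    intro n hn
    rw [MvPowerSeries.X_pow_eq, MvPowerSeries.coeff_monomial]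
    simp only [single0_eq, m2_eq_iff]
    split_ifs <;> solve | ring | (exfalso; omega) | omega
  rw [Finset.sum_congr rfl hterm, Finset.sum_ite_eq',
    if_pos (Finset.mem_range.mpr (by omega))]

end Extract

section Comm

lemma swap_factor (A : Matrix (Fin l) (Fin l) K) (s t : K) :
    (A + s • (1 : Matrix (Fin l) (Fin l) K)) * (A + t • 1)
      = (A + t • 1) * (A + s • 1) := by
  simp only [add_mul, mul_add, smul_mul_assoc, mul_smul_comm, Matrix.one_mul, Matrix.mul_one,
    smul_add, smul_smul]
  rw [mul_comm s t]
  abel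

lemma ascProdPos_comm (A : Matrix (Fin l) (Fin l) K) (α s : K) (n : ℕ) :
    (A + s • (1 : Matrix (Fin l) (Fin l) K)) * ascProdPos A α n
      = ascProdPos A α n * (A + s • 1) := by
  induction n with
  | zero => simp [ascProdPos]
  | succ n ih =>
    show (A + s • 1) * (ascProdPos A α n * _) = (ascProdPos A α n * _) * (A + s • 1)
    rw [← mul_assoc, ih, mul_assoc, swap_factor, ← mul_assoc]

/-- if the vector of power series `f(X) = Σ_n a_n X^n/n!`
(`a_n ∈ K^l`) satisfies
`f((1-αX₁)^{-1}(X₂-X₁)) = (1-αX₁)^{A/α}·(f(X₂) - f(X₁))` in `K[[X₁,X₂]]^l`,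
then `a_0 = 0` and `a_m = ∏_{i=1}^{m-1}(A + iα·I)·a_1` for all `m ≥ 1`.
The substituted argument `Y = (1-αX₁)^{-1}(X₂-X₁)` is characterized by
`Y·(1-αX₁) = X₂-X₁`. -/
theorem statement14 (α : K) (A : Matrix (Fin l) (Fin l) K)
    (a : ℕ → Fin l → K)
    (Y : MvPowerSeries (Fin 2) K)
    (hY0 : MvPowerSeries.coeff (R := K) 0 Y = 0)
    (hY : Y * (1 - MvPowerSeries.C (σ := Fin 2) (R := K) α * MvPowerSeries.X 0)
          = MvPowerSeries.X 1 - MvPowerSeries.X 0)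
    (hId : ∀ c : Fin l,
      fSub a Y c
        = ∑ c' : Fin l, matSeries A α c c' *
            (fSub a (MvPowerSeries.X 1) c' - fSub a (MvPowerSeries.X 0) c')) :
    a 0 = 0 ∧ ∀ m : ℕ, a (m + 1) = (ascProdPos A α m).mulVec (a 1) := by
  classical
  have ha0 : a 0 = 0 := by
    funext c
    have h := congrArg (MvPowerSeries.coeff (R := K) (m2 0 0)) (hId c)
    rw [coeff_fSub, map_sum, Finset.sum_range_one, coeff_powY0 α hY] at h
    have hz : ∀ c' : Fin l, MvPowerSeries.coeff (R := K) (m2 0 0)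
        (matSeries A α c c' *
          (fSub a (MvPowerSeries.X 1) c' - fSub a (MvPowerSeries.X 0) c')) = 0 := by
      intro c'
      rw [coeff_mul_m2, Finset.sum_range_one, Finset.sum_range_one, coeff_matSeries, map_sub,
        coeff_fSubX1, coeff_fSubX0]
      norm_num
    rw [Finset.sum_eq_zero (fun c' _ => hz c')] at h
    simpa using h
  refine ⟨ha0, ?_⟩
  have hrec : ∀ m : ℕ, 1 ≤ m → ∀ c,
      a (m+1) c = (m:K) * α * a m c + ∑ c', A c c' * a m c' := by
    intro m hm c
    have h := congrArg (MvPowerSeries.coeff (R := K) (m2 1 m)) (hId c)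
    rw [coeff_fSub, map_sum] at h
    have hL : ∀ n ∈ range (1 + m + 1),
        ((Nat.factorial n : K)⁻¹ * a n c) * MvPowerSeries.coeff (R := K) (m2 1 m) (Y ^ n)
        = (if n = m + 1 then ((Nat.factorial n : K)⁻¹ * a n c) * (-(n:K)) else 0)
          + (if n = m then ((Nat.factorial n : K)⁻¹ * a n c) * ((m:K)*α) else 0) := by
      intro n hn
      rw [coeff_powY1 α hY]
      split_ifs <;> solve | ring | (exfalso; omega) | (exact (by assumption : False).elim)
    rw [Finset.sum_congr rfl hL, Finset.sum_add_distrib, Finset.sum_ite_eq', Finset.sum_ite_eq',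
      if_pos (Finset.mem_range.mpr (by omega)), if_pos (Finset.mem_range.mpr (by omega))] at h
    have hR : ∀ c' : Fin l,
        MvPowerSeries.coeff (R := K) (m2 1 m)
          (matSeries A α c c' *
            (fSub a (MvPowerSeries.X 1) c' - fSub a (MvPowerSeries.X 0) c'))
        = -(A c c') * ((Nat.factorial m : K)⁻¹ * a m c') := by
      intro c'
      rw [coeff_mul_m2, Finset.sum_range_succ, Finset.sum_range_one]
      have hp0 : ∀ q ∈ range (m+1),
          MvPowerSeries.coeff (R := K) (m2 0 q) (matSeries A α c c') *
            MvPowerSeries.coeff (R := K) (m2 (1-0) (m-q))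
              (fSub a (MvPowerSeries.X 1) c' - fSub a (MvPowerSeries.X 0) c') = 0 := by
        intro q hq
        rw [mem_range] at hq
        rw [coeff_matSeries, map_sub, coeff_fSubX1, coeff_fSubX0]
        split_ifs <;> solve | ring | (exfalso; omega) | (exact (by assumption : False).elim)
      have hp1 : ∀ q ∈ range (m+1),
          MvPowerSeries.coeff (R := K) (m2 1 q) (matSeries A α c c') *
            MvPowerSeries.coeff (R := K) (m2 (1-1) (m-q))
              (fSub a (MvPowerSeries.X 1) c' - fSub a (MvPowerSeries.X 0) c')
          = if q = 0 then ((Nat.factorial 1 : K)⁻¹ * negAscProd A α 1 c c') *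
              ((Nat.factorial (m-q) : K)⁻¹ * a (m-q) c') else 0 := by
        intro q hq
        rw [mem_range] at hq
        rw [coeff_matSeries, map_sub, coeff_fSubX1, coeff_fSubX0]
        split_ifs <;> solve | ring | (exfalso; omega) | (exact (by assumption : False).elim)
      rw [Finset.sum_eq_zero hp0, Finset.sum_congr rfl hp1, Finset.sum_ite_eq',
        if_pos (Finset.mem_range.mpr (by omega)), zero_add]
      have hneg : negAscProd A α 1 = -A := by simp [negAscProd]
      rw [hneg]
      simp only [Nat.sub_zero, Nat.factorial_one, Nat.cast_one, inv_one, one_mul,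
        Matrix.neg_apply]
    rw [Finset.sum_congr rfl (fun c' _ => hR c')] at h
    have hsum : ∑ c', -(A c c') * ((Nat.factorial m : K)⁻¹ * a m c')
        = -((Nat.factorial m : K)⁻¹) * ∑ c', A c c' * a m c' := by
      rw [Finset.mul_sum]; exact Finset.sum_congr rfl (fun c' _ => by ring)
    rw [hsum, Nat.factorial_succ] at h
    have hfm : ((Nat.factorial m : K)) ≠ 0 := Nat.cast_ne_zero.mpr (Nat.factorial_ne_zero m)
    have hm1 : ((m+1 : ℕ) : K) ≠ 0 := Nat.cast_ne_zero.mpr (by omega)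
    have hm1' : ((m:K)+1) ≠ 0 := by exact_mod_cast hm1
    field_simp [hm1'] at h
    apply mul_left_cancel₀ (mul_ne_zero (mul_ne_zero (neg_ne_zero.mpr hm1') hfm) hfm)
    push_cast at h
    linear_combination (Nat.factorial m : K) * h
  intro m
  induction m with
  | zero =>
    show a 1 = (1 : Matrix (Fin l) (Fin l) K).mulVec (a 1)
    rw [Matrix.one_mulVec]
  | succ n ih =>
    have hstep : a (n+1+1) = (A + (((n+1:ℕ):K) * α) •
        (1 : Matrix (Fin l) (Fin l) K)).mulVec (a (n+1)) := by
      funext c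
      rw [hrec (n+1) (by omega) c]
      simp only [Matrix.mulVec, dotProduct, Matrix.add_apply, Matrix.smul_apply,
        Matrix.one_apply, smul_eq_mul]
      have hexp : ∀ x ∈ (univ : Finset (Fin l)),
          (A c x + (((n+1:ℕ):K) * α) * (if c = x then (1:K) else 0)) * a (n+1) x
          = A c x * a (n+1) x + (if c = x then (((n+1:ℕ):K) * α) * a (n+1) x else 0) := by
        intro x _; split_ifs <;> ring
      rw [Finset.sum_congr rfl hexp, Finset.sum_add_distrib, Finset.sum_ite_eq,
        if_pos (Finset.mem_univ c)]
      ring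
    rw [hstep, ih, Matrix.mulVec_mulVec, ascProdPos_comm]
    rfl
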